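/- Let F be an algebraically closed field and α₈ ∈ F nonzero. For any split octonion of the form (0, 0; c, δ) and any positive integer k, there exists Y ∈ O(F) such that (0, 0; c, δ) = (0, 0; 0, α₈)·Y^k. -/

import Mathlib

/-- Zorn vector matrices: the split octonion algebra over `F`. -/
structure Oct (F : Type*) where
  a : F              -- upper-left scalar η
  b : Fin 3 → F      -- upper-right vector x
  c : Fin 3 → F      -- lower-left vector y
  d : F              -- lower-right scalar ζ

namespace Oct

variable {F : Type*} [Field F]

/-- standard bilinear form on F^3 -/
def dot (x y : Fin 3 → F) : F := x 0 * y 0 + x 1 * y 1 + x 2 * y 2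

/-- cross product on F^3, satisfying ⟨x ∧ y, z⟩ = det(x,y,z) -/
def cross (x y : Fin 3 → F) : Fin 3 → F :=
  ![x 1 * y 2 - x 2 * y 1, x 2 * y 0 - x 0 * y 2, x 0 * y 1 - x 1 * y 0]

instance : Add (Oct F) :=
  ⟨fun A B => ⟨A.a + B.a, A.b + B.b, A.c + B.c, A.d + B.d⟩⟩

instance : Mul (Oct F) :=
  ⟨fun A B =>
    ⟨A.a * B.a + dot A.b B.c,
     A.a • B.b + B.d • A.b + cross A.c B.c,
     A.d • B.c + B.a • A.c + cross A.b B.b,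
     A.d * B.d + dot A.c B.b⟩⟩

instance : SMul F (Oct F) :=
  ⟨fun t A => ⟨t * A.a, t • A.b, t • A.c, t * A.d⟩⟩

instance : One (Oct F) := ⟨⟨1, 0, 0, 1⟩⟩

/-- powers, via A^{n+1} = A · A^n (well-defined by power-associativity) -/
def pow (A : Oct F) : ℕ → Oct F
  | 0 => 1
  | n + 1 => A * pow A n

/-- octonion conjugation -/
def conj (A : Oct F) : Oct F := ⟨A.d, -A.b, -A.c, A.a⟩

/-- the norm form -/
def norm (A : Oct F) : F := A.a * A.d - dot A.b A.c

end Oct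

/-!
Left multiplication by `(0, 0; 0, α)` sends `Y` to `(0, 0; α y, α ζ)`, so it suffices to find
`Y` whose `k`-th power has prescribed bottom row `(y, δ)`. For `δ = 0` the idempotent
`(1, 0; y, 0)` works. For `δ ≠ 0`, elements `(0, 0; y, ζ)` multiply like lower triangular
matrices, so `(0, 0; y, ζ)^(n+1) = (0, 0; ζ^n y, ζ^(n+1))`, and `δ` has a `k`-th root in `F`.
-/

namespace Oct

variable {F : Type*} [Field F]

lemma mul_def (A B : Oct F) : A * B =
    ⟨A.a * B.a + dot A.b B.c,
     A.a • B.b + B.d • A.b + cross A.c B.c,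
     A.d • B.c + B.a • A.c + cross A.b B.b,
     A.d * B.d + dot A.c B.b⟩ := rfl

@[simp] lemma dot_zero_left (y : Fin 3 → F) : dot 0 y = 0 := by
  simp [dot]

@[simp] lemma dot_zero_right (y : Fin 3 → F) : dot y 0 = 0 := by
  simp [dot]

@[simp] lemma cross_zero_left (y : Fin 3 → F) : cross 0 y = 0 := by
  funext i; fin_cases i <;> simp [cross]

@[simp] lemma cross_zero_right (y : Fin 3 → F) : cross y 0 = 0 := by
  funext i; fin_cases i <;> simp [cross]

@[simp] lemma cross_self (y : Fin 3 → F) : cross y y = 0 := by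
  funext i; fin_cases i <;> simp [cross] <;> ring

lemma cross_smul_right (t : F) (x y : Fin 3 → F) : cross x (t • y) = t • cross x y := by
  funext i; fin_cases i <;> simp [cross] <;> ring

protected lemma mul_one (A : Oct F) : A * 1 = A := by
  change A * ⟨1, 0, 0, 1⟩ = A
  simp [mul_def]

lemma pow_eq_self_of_mul_self {A : Oct F} (h : A * A = A) {k : ℕ} (hk : k ≠ 0) :
    pow A k = A := by
  induction k with
  | zero => exact absurd rfl hk
  | succ n ih =>
    rcases eq_or_ne n 0 with rfl | hn
    · exact Oct.mul_one A
    · change A * pow A n = A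
      rw [ih hn, h]

lemma mk_one_zero_zero_mul_self (y : Fin 3 → F) :
    (⟨1, 0, y, 0⟩ : Oct F) * ⟨1, 0, y, 0⟩ = ⟨1, 0, y, 0⟩ := by
  simp [mul_def]

lemma pow_succ_mk_zero_zero (y : Fin 3 → F) (ζ : F) (n : ℕ) :
    pow (⟨0, 0, y, ζ⟩ : Oct F) (n + 1) = ⟨0, 0, ζ ^ n • y, ζ ^ (n + 1)⟩ := by
  induction n with
  | zero => simpa [pow] using Oct.mul_one _
  | succ n ih =>
    change (⟨0, 0, y, ζ⟩ : Oct F) * pow _ (n + 1) = _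
    rw [ih, mul_def]
    simp [cross_smul_right, smul_smul, pow_succ, mul_comm]

lemma mk_zero_zero_zero_mul (α : F) (Y : Oct F) :
    (⟨0, 0, 0, α⟩ : Oct F) * Y = ⟨0, 0, α • Y.c, α * Y.d⟩ := by
  simp [mul_def]

lemma exists_pow_c_eq_and_d_eq [IsAlgClosed F] (y : Fin 3 → F) (δ : F) {k : ℕ} (hk : k ≠ 0) :
    ∃ Y : Oct F, (pow Y k).c = y ∧ (pow Y k).d = δ := by
  rcases eq_or_ne δ 0 with rfl | hδ
  · refine ⟨⟨1, 0, y, 0⟩, ?_⟩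
    rw [pow_eq_self_of_mul_self (mk_one_zero_zero_mul_self y) hk]
    exact ⟨rfl, rfl⟩
  obtain ⟨ζ, hζ⟩ := IsAlgClosed.exists_pow_nat_eq δ (Nat.pos_of_ne_zero hk)
  obtain ⟨n, rfl⟩ := Nat.exists_eq_succ_of_ne_zero hk
  have hζn : ζ ^ n ≠ 0 := pow_ne_zero n (by rintro rfl; simp_all)
  refine ⟨⟨0, 0, (ζ ^ n)⁻¹ • y, ζ⟩, ?_⟩
  simp [pow_succ_mk_zero_zero, smul_smul, hζn, hζ]

end Oct

open Oct
theorem stmt_6 {F : Type*} [Field F] [IsAlgClosed F] (α₈ : F) (hα₈ : α₈ ≠ 0)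
    (δ : F) (c : Fin 3 → F) (k : ℕ) (hk : 1 ≤ k) :
    ∃ Y : Oct F, (⟨0, 0, c, δ⟩ : Oct F) = (⟨0, 0, 0, α₈⟩ : Oct F) * pow Y k := by
  obtain ⟨Y, hc, hd⟩ :=
    exists_pow_c_eq_and_d_eq (α₈⁻¹ • c) (α₈⁻¹ * δ) (Nat.one_le_iff_ne_zero.mp hk)
  refine ⟨Y, ?_⟩
  rw [mk_zero_zero_zero_mul, hc, hd, smul_smul, mul_inv_cancel₀ hα₈, one_smul,
    mul_inv_cancel_left₀ hα₈]
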